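/- arXiv:1607.03959 — 3 statements merged into one kernel-verified Lean document; each statement's English description precedes it below -/
import Mathlib

section
/- Let n ≥ 1 and let V be a type. Let F be a finite family of 'facets' (finite subsets of V), each of cardinality n+1, such that every ridge of a facet (an n-element subset of a facet) is contained in exactly two facets of F. If F admits a facet 2-coloring — a function b from facets to a two-element set such that any two distinct facets whose intersection has cardinality n receive different values — then F admits a Grünbaum hyper-coloring: there exists a function c assigning to each ridge one of n+1 colors such that for every facet f of F, the n+1 ridges of f receive pairwise distinct colors (hence all n+1 colors appear on the ridges of each facet). -/
open Finset

lemma grunbaum_matching_aux {V : Type*} [DecidableEq V]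
    (F : Finset (Finset V)) (b : Finset V → Bool) :
    ∀ (k : ℕ) (R : Finset (Finset V)),
      (∀ r ∈ R, (F.filter fun f => r ⊆ f ∧ b f = true).card = 1 ∧
                (F.filter fun f => r ⊆ f ∧ b f = false).card = 1) →
      (∀ f ∈ F, (R.filter fun r => r ⊆ f).card = k) →
      ∃ c : Finset V → ℕ, (∀ r ∈ R, c r < k) ∧
        ∀ f ∈ F, ∀ r₁ ∈ R, ∀ r₂ ∈ R, r₁ ⊆ f → r₂ ⊆ f → r₁ ≠ r₂ → c r₁ ≠ c r₂ := by
  classical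
  intro k
  induction k with
  | zero =>
    intro R hR hreg
    have hempty : ∀ r ∈ R, False := by
      intro r hr
      obtain ⟨h1, _⟩ := hR r hr
      rw [Finset.card_eq_one] at h1
      obtain ⟨f, hf⟩ := h1
      have hfmem : f ∈ F.filter fun f => r ⊆ f ∧ b f = true := by
        rw [hf]; exact Finset.mem_singleton_self f
      rw [Finset.mem_filter] at hfmem
      have h0 := hreg f hfmem.1
      rw [Finset.card_eq_zero] at h0
      have : r ∈ R.filter fun r => r ⊆ f := Finset.mem_filter.mpr ⟨hr, hfmem.2.1⟩
      rw [h0] at this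
      exact absurd this (Finset.notMem_empty r)
    exact ⟨fun _ => 0, fun r hr => (hempty r hr).elim,
      fun f _ r₁ hr₁ => (hempty r₁ hr₁).elim⟩
  | succ k ih =>
    intro R hR hreg
    set B : Finset (Finset V) := F.filter (fun f => b f = true) with hBdef
    set W : Finset (Finset V) := F.filter (fun f => b f = false) with hWdef
    -- uniqueness helpers
    have huniqB : ∀ r ∈ R, ∀ f ∈ B, ∀ f' ∈ B, r ⊆ f → r ⊆ f' → f = f' := by
      intro r hr f hf f' hf' hrf hrf'
      obtain ⟨h1, -⟩ := hR r hr
      rw [Finset.card_eq_one] at h1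
      obtain ⟨f₀, hf₀⟩ := h1
      rw [hBdef, Finset.mem_filter] at hf hf'
      have e1 : f ∈ ({f₀} : Finset (Finset V)) := by
        rw [← hf₀]; exact Finset.mem_filter.mpr ⟨hf.1, hrf, hf.2⟩
      have e2 : f' ∈ ({f₀} : Finset (Finset V)) := by
        rw [← hf₀]; exact Finset.mem_filter.mpr ⟨hf'.1, hrf', hf'.2⟩
      rw [Finset.mem_singleton] at e1 e2
      rw [e1, e2]
    have huniqW : ∀ r ∈ R, ∀ f ∈ W, ∀ f' ∈ W, r ⊆ f → r ⊆ f' → f = f' := by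
      intro r hr f hf f' hf' hrf hrf'
      obtain ⟨-, h1⟩ := hR r hr
      rw [Finset.card_eq_one] at h1
      obtain ⟨f₀, hf₀⟩ := h1
      rw [hWdef, Finset.mem_filter] at hf hf'
      have e1 : f ∈ ({f₀} : Finset (Finset V)) := by
        rw [← hf₀]; exact Finset.mem_filter.mpr ⟨hf.1, hrf, hf.2⟩
      have e2 : f' ∈ ({f₀} : Finset (Finset V)) := by
        rw [← hf₀]; exact Finset.mem_filter.mpr ⟨hf'.1, hrf', hf'.2⟩
      rw [Finset.mem_singleton] at e1 e2
      rw [e1, e2]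
    have hexB : ∀ r ∈ R, ∃ f ∈ B, r ⊆ f := by
      intro r hr
      obtain ⟨h1, -⟩ := hR r hr
      have : (F.filter fun f => r ⊆ f ∧ b f = true).Nonempty := by
        rw [← Finset.card_pos, h1]; norm_num
      obtain ⟨f, hf⟩ := this
      rw [Finset.mem_filter] at hf
      exact ⟨f, Finset.mem_filter.mpr ⟨hf.1, hf.2.2⟩, hf.2.1⟩
    have hexW : ∀ r ∈ R, ∃ g ∈ W, r ⊆ g := by
      intro r hr
      obtain ⟨-, h1⟩ := hR r hr
      have : (F.filter fun f => r ⊆ f ∧ b f = false).Nonempty := by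
        rw [← Finset.card_pos, h1]; norm_num
      obtain ⟨f, hf⟩ := this
      rw [Finset.mem_filter] at hf
      exact ⟨f, Finset.mem_filter.mpr ⟨hf.1, hf.2.2⟩, hf.2.1⟩
    have hBF : B ⊆ F := Finset.filter_subset _ _
    have hWF : W ⊆ F := Finset.filter_subset _ _
    -- counting: for s ⊆ B, edges from s have card (k+1) * s.card
    have hcount : ∀ s ⊆ B, (s.biUnion fun f => R.filter fun r => r ⊆ f).card
        = (k + 1) * s.card := by
      intro s hs
      rw [Finset.card_biUnion]
      · rw [Finset.sum_congr rfl (fun f hf => hreg f (hBF (hs hf)))]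
        rw [Finset.sum_const, smul_eq_mul, mul_comm]
      · intro f hf f' hf' hne
        simp only [Function.onFun]
        rw [Finset.disjoint_left]
        intro r hrf hrf'
        rw [Finset.mem_filter] at hrf hrf'
        exact hne (huniqB r hrf.1 f (hs hf) f' (hs hf') hrf.2 hrf'.2)
    -- Hall's condition for t x = white neighbours of x
    set t : {f // f ∈ B} → Finset (Finset V) :=
      fun x => W.filter (fun g => ∃ r ∈ R, r ⊆ x.val ∧ r ⊆ g) with htdef
    have hall : ∀ s : Finset {f // f ∈ B}, s.card ≤ (s.biUnion t).card := by
      intro s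
      set s' : Finset (Finset V) := s.image Subtype.val with hs'def
      have hs'B : s' ⊆ B := by
        intro f hf
        rw [hs'def, Finset.mem_image] at hf
        obtain ⟨x, -, rfl⟩ := hf
        exact x.2
      have hcard' : s'.card = s.card :=
        Finset.card_image_of_injective s Subtype.val_injective
      set N : Finset (Finset V) := s.biUnion t with hNdef
      have hNW : N ⊆ W := by
        intro g hg
        rw [hNdef, Finset.mem_biUnion] at hg
        obtain ⟨x, -, hx⟩ := hg
        exact (Finset.mem_filter.mp hx).1
      have hsub : (s'.biUnion fun f => R.filter fun r => r ⊆ f)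
          ⊆ N.biUnion fun g => R.filter fun r => r ⊆ g := by
        intro r hrmem
        rw [Finset.mem_biUnion] at hrmem
        obtain ⟨f, hfs', hrf⟩ := hrmem
        rw [Finset.mem_filter] at hrf
        obtain ⟨hrR, hrsub⟩ := hrf
        obtain ⟨g, hgW, hrg⟩ := hexW r hrR
        rw [hs'def, Finset.mem_image] at hfs'
        obtain ⟨x, hxs, rfl⟩ := hfs'
        rw [Finset.mem_biUnion]
        refine ⟨g, ?_, Finset.mem_filter.mpr ⟨hrR, hrg⟩⟩
        rw [hNdef, Finset.mem_biUnion]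
        exact ⟨x, hxs, Finset.mem_filter.mpr ⟨hgW, r, hrR, hrsub, hrg⟩⟩
      have h1 : (k + 1) * s.card ≤ (N.biUnion fun g => R.filter fun r => r ⊆ g).card := by
        rw [← hcard', ← hcount s' hs'B]
        exact Finset.card_le_card hsub
      have h2 : (N.biUnion fun g => R.filter fun r => r ⊆ g).card ≤ (k + 1) * N.card := by
        calc (N.biUnion fun g => R.filter fun r => r ⊆ g).card
            ≤ ∑ g ∈ N, (R.filter fun r => r ⊆ g).card := Finset.card_biUnion_le
          _ = (k + 1) * N.card := by
              rw [Finset.sum_congr rfl (fun g hg => hreg g (hWF (hNW hg)))]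
              rw [Finset.sum_const, smul_eq_mul, mul_comm]
      have := h1.trans h2
      exact Nat.le_of_mul_le_mul_left this (Nat.succ_pos k)
    obtain ⟨m, hminj, hmt⟩ := (Finset.all_card_le_biUnion_card_iff_exists_injective t).mp hall
    -- |B| = |W|
    have hRB : R = B.biUnion fun f => R.filter fun r => r ⊆ f := by
      apply Finset.Subset.antisymm
      · intro r hr
        obtain ⟨f, hfB, hrf⟩ := hexB r hr
        exact Finset.mem_biUnion.mpr ⟨f, hfB, Finset.mem_filter.mpr ⟨hr, hrf⟩⟩
      · intro r hr
        obtain ⟨f, -, hrf⟩ := Finset.mem_biUnion.mp hr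
        exact (Finset.mem_filter.mp hrf).1
    have hRW : R = W.biUnion fun f => R.filter fun r => r ⊆ f := by
      apply Finset.Subset.antisymm
      · intro r hr
        obtain ⟨f, hfW, hrf⟩ := hexW r hr
        exact Finset.mem_biUnion.mpr ⟨f, hfW, Finset.mem_filter.mpr ⟨hr, hrf⟩⟩
      · intro r hr
        obtain ⟨f, -, hrf⟩ := Finset.mem_biUnion.mp hr
        exact (Finset.mem_filter.mp hrf).1
    have hcountW : ∀ s ⊆ W, (s.biUnion fun f => R.filter fun r => r ⊆ f).card
        = (k + 1) * s.card := by
      intro s hs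
      rw [Finset.card_biUnion]
      · rw [Finset.sum_congr rfl (fun f hf => hreg f (hWF (hs hf)))]
        rw [Finset.sum_const, smul_eq_mul, mul_comm]
      · intro f hf f' hf' hne
        simp only [Function.onFun]
        rw [Finset.disjoint_left]
        intro r hrf hrf'
        rw [Finset.mem_filter] at hrf hrf'
        exact hne (huniqW r hrf.1 f (hs hf) f' (hs hf') hrf.2 hrf'.2)
    have hBWcard : B.card = W.card := by
      have e1 : R.card = (k + 1) * B.card := by rw [hRB]; exact hcount B (le_refl B)
      have e2 : R.card = (k + 1) * W.card := by rw [hRW]; exact hcountW W (le_refl W)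
      exact Nat.eq_of_mul_eq_mul_left (Nat.succ_pos k) (e1 ▸ e2)
    -- m is surjective onto W
    have hmW : ∀ x, m x ∈ W := fun x => (Finset.mem_filter.mp (hmt x)).1
    have hmsurj : ∀ g ∈ W, ∃ x, m x = g := by
      intro g hg
      have himg : Finset.univ.image m ⊆ W := by
        intro y hy
        obtain ⟨x, -, rfl⟩ := Finset.mem_image.mp hy
        exact hmW x
      have hcardimg : (Finset.univ.image m).card = W.card := by
        rw [Finset.card_image_of_injective _ hminj, Finset.card_univ,
          Fintype.card_coe, hBWcard]
      have : Finset.univ.image m = W :=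
        Finset.eq_of_subset_of_card_le himg (le_of_eq hcardimg.symm)
      rw [← this] at hg
      obtain ⟨x, -, hx⟩ := Finset.mem_image.mp hg
      exact ⟨x, hx⟩
    -- choose the matching ridge for each black facet
    have hchoice : ∀ x : {f // f ∈ B}, ∃ r, r ∈ R ∧ r ⊆ x.val ∧ r ⊆ m x := by
      intro x
      have := (Finset.mem_filter.mp (hmt x)).2
      obtain ⟨r, hrR, h1, h2⟩ := this
      exact ⟨r, hrR, h1, h2⟩
    set rid : {f // f ∈ B} → Finset V := fun x => (hchoice x).choose with hriddef
    have hridR : ∀ x, rid x ∈ R := fun x => (hchoice x).choose_spec.1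
    have hridB : ∀ x, rid x ⊆ x.val := fun x => (hchoice x).choose_spec.2.1
    have hridW : ∀ x, rid x ⊆ m x := fun x => (hchoice x).choose_spec.2.2
    set M : Finset (Finset V) := Finset.univ.image rid with hMdef
    have hMR : M ⊆ R := by
      intro r hr
      obtain ⟨x, -, rfl⟩ := Finset.mem_image.mp hr
      exact hridR x
    -- M is a perfect matching: every facet of F contains exactly one member of M
    have hmatch : ∀ f ∈ F, (M.filter fun r => r ⊆ f).card = 1 := by
      intro f hf
      rw [Finset.card_eq_one]
      cases hbf : b f with
      | true =>
        have hfB : f ∈ B := Finset.mem_filter.mpr ⟨hf, hbf⟩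
        refine ⟨rid ⟨f, hfB⟩, ?_⟩
        apply Finset.Subset.antisymm
        · intro r hr
          rw [Finset.mem_filter] at hr
          obtain ⟨hrM, hrf⟩ := hr
          obtain ⟨x, -, rfl⟩ := Finset.mem_image.mp hrM
          have : x.val = f := huniqB _ (hridR x) x.val x.2 f hfB (hridB x) hrf
          rw [Finset.mem_singleton]
          congr 1
          exact Subtype.ext this
        · intro r hr
          rw [Finset.mem_singleton] at hr
          subst hr
          exact Finset.mem_filter.mpr
            ⟨Finset.mem_image.mpr ⟨⟨f, hfB⟩, Finset.mem_univ _, rfl⟩, hridB ⟨f, hfB⟩⟩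
      | false =>
        have hfW : f ∈ W := Finset.mem_filter.mpr ⟨hf, hbf⟩
        obtain ⟨x₀, hx₀⟩ := hmsurj f hfW
        refine ⟨rid x₀, ?_⟩
        apply Finset.Subset.antisymm
        · intro r hr
          rw [Finset.mem_filter] at hr
          obtain ⟨hrM, hrf⟩ := hr
          obtain ⟨x, -, rfl⟩ := Finset.mem_image.mp hrM
          have : m x = f := huniqW _ (hridR x) (m x) (hmW x) f hfW (hridW x) hrf
          rw [Finset.mem_singleton]
          congr 1
          exact hminj (by rw [this, hx₀])
        · intro r hr
          rw [Finset.mem_singleton] at hr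
          subst hr
          refine Finset.mem_filter.mpr
            ⟨Finset.mem_image.mpr ⟨x₀, Finset.mem_univ _, rfl⟩, ?_⟩
          rw [← hx₀]
          exact hridW x₀
    -- Remove M and recurse
    set R' : Finset (Finset V) := R \ M with hR'def
    have hR'sub : R' ⊆ R := Finset.sdiff_subset
    have hreg' : ∀ f ∈ F, (R'.filter fun r => r ⊆ f).card = k := by
      intro f hf
      have hfilt : R'.filter (fun r => r ⊆ f)
          = R.filter (fun r => r ⊆ f) \ M.filter (fun r => r ⊆ f) := by
        rw [hR'def]
        ext r
        simp only [Finset.mem_filter, Finset.mem_sdiff]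
        tauto
      have hsubf : M.filter (fun r => r ⊆ f) ⊆ R.filter (fun r => r ⊆ f) :=
        Finset.filter_subset_filter _ hMR
      rw [hfilt, Finset.card_sdiff_of_subset hsubf, hreg f hf, hmatch f hf]
      omega
    obtain ⟨c', hc'lt, hc'inj⟩ := ih R' (fun r hr => hR r (hR'sub hr)) hreg'
    refine ⟨fun r => if r ∈ M then k else c' r, ?_, ?_⟩
    · intro r hr
      by_cases hM : r ∈ M
      · simp [hM]
      · simp only [hM, if_false]
        have : r ∈ R' := Finset.mem_sdiff.mpr ⟨hr, hM⟩
        exact Nat.lt_succ_of_lt (hc'lt r this)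
    · intro f hf r₁ hr₁ r₂ hr₂ hs₁ hs₂ hne
      by_cases h₁ : r₁ ∈ M <;> by_cases h₂ : r₂ ∈ M
      · exfalso
        have hcard1 := hmatch f hf
        rw [Finset.card_eq_one] at hcard1
        obtain ⟨a, ha⟩ := hcard1
        have e₁ : r₁ ∈ ({a} : Finset (Finset V)) := by
          rw [← ha]; exact Finset.mem_filter.mpr ⟨h₁, hs₁⟩
        have e₂ : r₂ ∈ ({a} : Finset (Finset V)) := by
          rw [← ha]; exact Finset.mem_filter.mpr ⟨h₂, hs₂⟩
        rw [Finset.mem_singleton] at e₁ e₂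
        exact hne (e₁.trans e₂.symm)
      · simp only [h₁, h₂, if_true, if_false]
        have : r₂ ∈ R' := Finset.mem_sdiff.mpr ⟨hr₂, h₂⟩
        exact fun h => absurd h.symm (Nat.ne_of_lt (hc'lt r₂ this))
      · simp only [h₁, h₂, if_true, if_false]
        have : r₁ ∈ R' := Finset.mem_sdiff.mpr ⟨hr₁, h₁⟩
        exact Nat.ne_of_lt (hc'lt r₁ this)
      · simp only [h₁, h₂, if_false]
        exact hc'inj f hf r₁ (Finset.mem_sdiff.mpr ⟨hr₁, h₁⟩)
          r₂ (Finset.mem_sdiff.mpr ⟨hr₂, h₂⟩) hs₁ hs₂ hne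

/-- Theorem 1 of the paper, combinatorially: for a pure `n`-dimensional
pseudomanifold given by its facet family `F` (facets are `(n+1)`-element
subsets of the vertex type `V`, and every ridge, i.e. `n`-element subset of a
facet, lies in exactly two facets of `F`), facet 2-colorability implies
Grünbaum hyper-colorability: the ridges can be `(n+1)`-colored so that within
each facet the `n+1` ridges get pairwise distinct colors. -/
theorem facet_two_colorable_implies_grunbaum_hypercolorable
    {V : Type*} [DecidableEq V] (n : ℕ) (hn : 1 ≤ n)
    (F : Finset (Finset V))
    (hcard : ∀ f ∈ F, f.card = n + 1)
    (hpseudo : ∀ f ∈ F, ∀ r ⊆ f, r.card = n →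
      (F.filter fun g => r ⊆ g).card = 2)
    (hb : ∃ b : Finset V → Bool,
      ∀ f ∈ F, ∀ g ∈ F, f ≠ g → (f ∩ g).card = n → b f ≠ b g) :
    ∃ c : Finset V → Fin (n + 1),
      ∀ f ∈ F, ∀ r₁ ⊆ f, ∀ r₂ ⊆ f,
        r₁.card = n → r₂.card = n → r₁ ≠ r₂ → c r₁ ≠ c r₂ := by
  classical
  obtain ⟨b, hb2⟩ := hb
  set R₀ : Finset (Finset V) := F.biUnion (fun f => Finset.powersetCard n f) with hR₀def
  have hmemR₀ : ∀ r ∈ R₀, r.card = n ∧ ∃ f ∈ F, r ⊆ f := by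
    intro r hr
    obtain ⟨f, hf, hrf⟩ := Finset.mem_biUnion.mp hr
    rw [Finset.mem_powersetCard] at hrf
    exact ⟨hrf.2, f, hf, hrf.1⟩
  have hRprop : ∀ r ∈ R₀,
      (F.filter fun f => r ⊆ f ∧ b f = true).card = 1 ∧
      (F.filter fun f => r ⊆ f ∧ b f = false).card = 1 := by
    intro r hr
    obtain ⟨hrn, f, hf, hrf⟩ := hmemR₀ r hr
    have h2 := hpseudo f hf r hrf hrn
    rw [Finset.card_eq_two] at h2
    obtain ⟨g₁, g₂, hne, hfilter⟩ := h2
    have hg₁ : g₁ ∈ F ∧ r ⊆ g₁ := by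
      have : g₁ ∈ F.filter fun g => r ⊆ g := by
        rw [hfilter]; exact Finset.mem_insert_self _ _
      exact Finset.mem_filter.mp this
    have hg₂ : g₂ ∈ F ∧ r ⊆ g₂ := by
      have : g₂ ∈ F.filter fun g => r ⊆ g := by
        rw [hfilter]; exact Finset.mem_insert_of_mem (Finset.mem_singleton_self _)
      exact Finset.mem_filter.mp this
    have hbne : b g₁ ≠ b g₂ := by
      apply hb2 g₁ hg₁.1 g₂ hg₂.1 hne
      have hle : (g₁ ∩ g₂).card ≤ g₁.card := Finset.card_le_card inter_subset_left
      have hge : n ≤ (g₁ ∩ g₂).card := by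
        rw [← hrn]
        exact Finset.card_le_card (Finset.subset_inter hg₁.2 hg₂.2)
      have hne' : (g₁ ∩ g₂).card ≠ n + 1 := by
        intro hEq
        apply hne
        have h1 : g₁ ∩ g₂ = g₁ := Finset.eq_of_subset_of_card_le inter_subset_left
          (by rw [hEq, hcard g₁ hg₁.1])
        have h2 : g₁ ⊆ g₂ := by rw [← h1]; exact inter_subset_right
        exact Finset.eq_of_subset_of_card_le h2
          (by rw [hcard g₁ hg₁.1, hcard g₂ hg₂.1])
      have := hcard g₁ hg₁.1
      omega
    have key : ∀ v : Bool, (F.filter fun f => r ⊆ f ∧ b f = v).card = 1 := by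
      intro v
      have hsplit : (F.filter fun f => r ⊆ f ∧ b f = v)
          = ({g₁, g₂} : Finset (Finset V)).filter (fun f => b f = v) := by
        rw [← hfilter, Finset.filter_filter]
      rw [hsplit]
      have : ({g₁, g₂} : Finset (Finset V)) = insert g₁ {g₂} := rfl
      rw [this, Finset.filter_insert, Finset.filter_singleton]
      rcases hbv₁ : b g₁ <;> rcases hbv₂ : b g₂ <;> rcases v <;>
        simp_all [Finset.card_insert_of_notMem, hne]
    exact ⟨key true, key false⟩
  have hreg : ∀ f ∈ F, (R₀.filter fun r => r ⊆ f).card = n + 1 := by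
    intro f hf
    have heq : R₀.filter (fun r => r ⊆ f) = Finset.powersetCard n f := by
      apply Finset.Subset.antisymm
      · intro r hr
        rw [Finset.mem_filter] at hr
        obtain ⟨hrn, -⟩ := hmemR₀ r hr.1
        exact Finset.mem_powersetCard.mpr ⟨hr.2, hrn⟩
      · intro r hr
        refine Finset.mem_filter.mpr ⟨Finset.mem_biUnion.mpr ⟨f, hf, hr⟩, ?_⟩
        exact (Finset.mem_powersetCard.mp hr).1
    rw [heq, Finset.card_powersetCard, hcard f hf, Nat.choose_succ_self_right]
  obtain ⟨c, hclt, hcinj⟩ := grunbaum_matching_aux F b (n + 1) R₀ hRprop hreg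
  refine ⟨fun r => ⟨min (c r) n, by omega⟩, ?_⟩
  intro f hf r₁ h₁ r₂ h₂ hc₁ hc₂ hne
  have hr₁ : r₁ ∈ R₀ := Finset.mem_biUnion.mpr ⟨f, hf, Finset.mem_powersetCard.mpr ⟨h₁, hc₁⟩⟩
  have hr₂ : r₂ ∈ R₀ := Finset.mem_biUnion.mpr ⟨f, hf, Finset.mem_powersetCard.mpr ⟨h₂, hc₂⟩⟩
  have hlt₁ := hclt r₁ hr₁
  have hlt₂ := hclt r₂ hr₂
  have hmin₁ : min (c r₁) n = c r₁ := by omega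
  have hmin₂ : min (c r₂) n = c r₂ := by omega
  intro hEq
  have : min (c r₁) n = min (c r₂) n := congrArg Fin.val hEq
  rw [hmin₁, hmin₂] at this
  exact hcinj f hf r₁ hr₁ r₂ hr₂ h₁ h₂ hne this
end

section
/- Let n ≥ 1, let V be a type, and let F be a family of facets (finite subsets of V, each of cardinality n+1) admitting a facet 2-coloring b with colors black and white, where two distinct facets are adjacent iff their intersection has cardinality n. Let N and S be two new vertices not in V, and form the bipyramidal crown F' = { f ∪ {N} : f ∈ F } ∪ { f ∪ {S} : f ∈ F }, a family of (n+2)-element subsets of V together with the two new points. Then F' admits a facet 2-coloring (with adjacency of facets of F' defined as intersection of cardinality n+1); explicitly, coloring f ∪ {N} with b(f) and f ∪ {S} with the color opposite to b(f) is such a coloring. -/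
/-- The bipyramidal crowning construction of Section 5 of the paper, stated
combinatorially: if a family `F` of facets ((n+1)-element subsets of `V`,
none containing the two new distinct apexes `N` and `S`) has a facet
2-coloring `b` (distinct facets meeting in an `n`-element set get different
colors), then the bipyramidal crown
`F' = {f ∪ {N} : f ∈ F} ∪ {f ∪ {S} : f ∈ F}` has a facet 2-coloring, namely
the one coloring `f ∪ {N}` by `b f` and `f ∪ {S}` by the opposite color
(facets of `F'` being adjacent when their intersection has cardinality
`n + 1`). -/
theorem bipyramidal_crown_facet_two_colorable
    {V : Type*} [DecidableEq V] (n : ℕ) (hn : 1 ≤ n)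
    (F : Set (Finset V)) (N S : V) (hNS : N ≠ S)
    (hcard : ∀ f ∈ F, f.card = n + 1)
    (hN : ∀ f ∈ F, N ∉ f) (hS : ∀ f ∈ F, S ∉ f)
    (b : Finset V → Bool)
    (hb : ∀ f ∈ F, ∀ g ∈ F, f ≠ g → (f ∩ g).card = n → b f ≠ b g) :
    ∃ b' : Finset V → Bool,
      (∀ f ∈ F, b' (insert N f) = b f ∧ b' (insert S f) = !(b f)) ∧
      (∀ g₁ ∈ ({g | ∃ f ∈ F, g = insert N f} ∪ {g | ∃ f ∈ F, g = insert S f} :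
          Set (Finset V)),
       ∀ g₂ ∈ ({g | ∃ f ∈ F, g = insert N f} ∪ {g | ∃ f ∈ F, g = insert S f} :
          Set (Finset V)),
        g₁ ≠ g₂ → (g₁ ∩ g₂).card = n + 1 → b' g₁ ≠ b' g₂) := by
  classical
  have key : ∀ f₁ ∈ F, ∀ f₂ ∈ F, (f₁ ∩ f₂).card = n + 1 → f₁ = f₂ := by
    intro f₁ h₁ f₂ h₂ hc
    have h1 : f₁ ∩ f₂ = f₁ :=
      Finset.eq_of_subset_of_card_le Finset.inter_subset_left
        (by rw [hc, hcard f₁ h₁])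
    have h2 : f₁ ∩ f₂ = f₂ :=
      Finset.eq_of_subset_of_card_le Finset.inter_subset_right
        (by rw [hc, hcard f₂ h₂])
    rw [← h1, h2]
  refine ⟨fun g => if N ∈ g then b (g.erase N) else !b (g.erase S), ?_, ?_⟩
  · intro f hf
    constructor
    · simp [Finset.erase_insert (hN f hf)]
    · have hNn : N ∉ insert S f := by
        simp [hNS, hN f hf]
      simp [hNn, Finset.erase_insert (hS f hf)]
  · rintro g₁ (⟨f₁, hf₁, rfl⟩ | ⟨f₁, hf₁, rfl⟩) g₂ (⟨f₂, hf₂, rfl⟩ | ⟨f₂, hf₂, rfl⟩) hne hci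
    · -- N N
      have hint : insert N f₁ ∩ insert N f₂ = insert N (f₁ ∩ f₂) := by
        ext a; simp; tauto
      have hNni : N ∉ f₁ ∩ f₂ := fun h => hN f₁ hf₁ (Finset.mem_inter.1 h).1
      have hcn : (f₁ ∩ f₂).card = n := by
        have := hci
        rw [hint, Finset.card_insert_of_notMem hNni] at this
        omega
      have hfne : f₁ ≠ f₂ := by
        intro h; exact hne (by rw [h])
      simp only [Finset.mem_insert_self, if_pos,
        Finset.erase_insert (hN f₁ hf₁), Finset.erase_insert (hN f₂ hf₂)]
      exact hb f₁ hf₁ f₂ hf₂ hfne hcn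
    · -- N S
      have hint : insert N f₁ ∩ insert S f₂ = f₁ ∩ f₂ := by
        ext a
        simp only [Finset.mem_inter, Finset.mem_insert]
        constructor
        · rintro ⟨h1 | h1, h2 | h2⟩
          · exact absurd (h1.symm.trans h2) hNS
          · exact absurd (h1 ▸ h2) (hN f₂ hf₂)
          · exact absurd (h2 ▸ h1) (hS f₁ hf₁)
          · exact ⟨h1, h2⟩
        · tauto
      rw [hint] at hci
      have heq : f₁ = f₂ := key f₁ hf₁ f₂ hf₂ hci
      subst heq
      have hNn2 : N ∉ insert S f₁ := by simp [hNS, hN f₁ hf₁]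
      simp [hNn2, Finset.erase_insert (hN f₁ hf₁), Finset.erase_insert (hS f₁ hf₁)]
    · -- S N
      have hint : insert S f₁ ∩ insert N f₂ = f₁ ∩ f₂ := by
        ext a
        simp only [Finset.mem_inter, Finset.mem_insert]
        constructor
        · rintro ⟨h1 | h1, h2 | h2⟩
          · exact absurd (h2.symm.trans h1) hNS
          · exact absurd (h1 ▸ h2) (hS f₂ hf₂)
          · exact absurd (h2 ▸ h1) (hN f₁ hf₁)
          · exact ⟨h1, h2⟩
        · tauto
      rw [hint] at hci
      have heq : f₁ = f₂ := key f₁ hf₁ f₂ hf₂ hci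
      subst heq
      have hNn1 : N ∉ insert S f₁ := by simp [hNS, hN f₁ hf₁]
      simp [hNn1, Finset.erase_insert (hN f₁ hf₁), Finset.erase_insert (hS f₁ hf₁)]
    · -- S S
      have hint : insert S f₁ ∩ insert S f₂ = insert S (f₁ ∩ f₂) := by
        ext a; simp; tauto
      have hSni : S ∉ f₁ ∩ f₂ := fun h => hS f₁ hf₁ (Finset.mem_inter.1 h).1
      have hcn : (f₁ ∩ f₂).card = n := by
        have := hci
        rw [hint, Finset.card_insert_of_notMem hSni] at this
        omega
      have hfne : f₁ ≠ f₂ := by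
        intro h; exact hne (by rw [h])
      have hNn1 : N ∉ insert S f₁ := by simp [hNS, hN f₁ hf₁]
      have hNn2 : N ∉ insert S f₂ := by simp [hNS, hN f₂ hf₂]
      simp only [hNn1, hNn2, if_neg, not_false_iff,
        Finset.erase_insert (hS f₁ hf₁), Finset.erase_insert (hS f₂ hf₂)]
      intro h
      exact hb f₁ hf₁ f₂ hf₂ hfne hcn (Bool.not_inj h)
end

section
/- Let n ≥ 1 and let V₁ and V₂ be disjoint vertex types. Let F₁ and F₂ be families of facets ((n+1)-element subsets of V₁ and of V₂ respectively) with facet 2-colorings b₁ and b₂ using colors black and white (two distinct facets are adjacent iff their intersection has cardinality n, and adjacent facets get different colors). Fix a black facet f₁ ∈ F₁, a white facet f₂ ∈ F₂, and a bijection e : f₂ → f₁. Let ψ map each vertex of V₂ lying in f₂ to its image under e and fix every other vertex, and form the glued family F = (F₁ \ {f₁}) ∪ { ψ(f) : f ∈ F₂ \ {f₂} } of (n+1)-element subsets of the disjoint union of V₁ and V₂. Assume additionally that every n-element subset of f₁ (resp. of f₂) is contained in exactly one facet of F₁ \ {f₁} (resp. of F₂ \ {f₂}). Then F admits a facet 2-coloring;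 explicitly, coloring each facet coming from F₁ by b₁ and each facet ψ(f) coming from F₂ by b₂(f) is such a coloring. -/
/-- The glue operator of Section 5 of the paper, stated combinatorially.
`F₁` and `F₂` are facet families ((n+1)-element subsets of the disjoint
vertex types `V₁` and `V₂`) with facet 2-colorings `b₁`, `b₂` (colors `true`
= black, `false` = white).  A black facet `f₁ ∈ F₁` is merged with a white
facet `f₂ ∈ F₂` via a bijection `e : f₂ → f₁`; the map `ψ` sends each vertex
of `f₂` to its image under `e` (inside `V₁`) and fixes all other vertices of
`V₂`.  Assuming each `n`-element subset of `f₁` (resp. `f₂`) lies in exactly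
one facet of `F₁ \ {f₁}` (resp. `F₂ \ {f₂}`), the glued family
`F = (F₁ \ {f₁}) ∪ {ψ(f) : f ∈ F₂ \ {f₂}}` of subsets of `V₁ ⊕ V₂` admits a
facet 2-coloring, namely the one inheriting `b₁` on facets from `F₁` and `b₂`
on facets from `F₂`. -/
theorem glue_facet_two_colorable
    {V₁ V₂ : Type*} [DecidableEq V₁] [DecidableEq V₂] (n : ℕ) (hn : 1 ≤ n)
    (F₁ : Set (Finset V₁)) (F₂ : Set (Finset V₂))
    (hcard₁ : ∀ f ∈ F₁, f.card = n + 1) (hcard₂ : ∀ f ∈ F₂, f.card = n + 1)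
    (b₁ : Finset V₁ → Bool) (b₂ : Finset V₂ → Bool)
    (hb₁ : ∀ f ∈ F₁, ∀ g ∈ F₁, f ≠ g → (f ∩ g).card = n → b₁ f ≠ b₁ g)
    (hb₂ : ∀ f ∈ F₂, ∀ g ∈ F₂, f ≠ g → (f ∩ g).card = n → b₂ f ≠ b₂ g)
    (f₁ : Finset V₁) (hf₁ : f₁ ∈ F₁) (hblack : b₁ f₁ = true)
    (f₂ : Finset V₂) (hf₂ : f₂ ∈ F₂) (hwhite : b₂ f₂ = false)
    (e : V₂ → V₁) (he : Set.BijOn e ↑f₂ ↑f₁)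
    (ψ : V₂ → V₁ ⊕ V₂)
    (hψ : ∀ v : V₂, ψ v = if v ∈ f₂ then Sum.inl (e v) else Sum.inr v)
    (hridge₁ : ∀ r ⊆ f₁, r.card = n → ∃! g, (g ∈ F₁ ∧ g ≠ f₁) ∧ r ⊆ g)
    (hridge₂ : ∀ r ⊆ f₂, r.card = n → ∃! g, (g ∈ F₂ ∧ g ≠ f₂) ∧ r ⊆ g) :
    ∃ b : Finset (V₁ ⊕ V₂) → Bool,
      (∀ f ∈ F₁, f ≠ f₁ → b (f.image Sum.inl) = b₁ f) ∧
      (∀ f ∈ F₂, f ≠ f₂ → b (f.image ψ) = b₂ f) ∧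
      (∀ g₁ ∈ ({g | ∃ f ∈ F₁, f ≠ f₁ ∧ g = f.image Sum.inl} ∪
          {g | ∃ f ∈ F₂, f ≠ f₂ ∧ g = f.image ψ} : Set (Finset (V₁ ⊕ V₂))),
       ∀ g₂ ∈ ({g | ∃ f ∈ F₁, f ≠ f₁ ∧ g = f.image Sum.inl} ∪
          {g | ∃ f ∈ F₂, f ≠ f₂ ∧ g = f.image ψ} : Set (Finset (V₁ ⊕ V₂))),
        g₁ ≠ g₂ → (g₁ ∩ g₂).card = n → b g₁ ≠ b g₂) := by

  classical
  have hinl : Function.Injective (Sum.inl : V₁ → V₁ ⊕ V₂) := Sum.inl_injective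
  have hψinj : Function.Injective ψ := by
    intro v w hvw
    rw [hψ v, hψ w] at hvw
    by_cases hv : v ∈ f₂ <;> by_cases hw : w ∈ f₂ <;> simp [hv, hw] at hvw
    · exact he.injOn (Finset.mem_coe.mpr hv) (Finset.mem_coe.mpr hw) hvw
    · exact hvw
  have hdisj : ∀ f ∈ F₂, f ≠ f₂ → ∀ f' : Finset V₁,
      f.image ψ ≠ f'.image Sum.inl := by
    intro f hf hne f' hEq
    have hns : ¬ f ⊆ f₂ := fun hs => hne (Finset.eq_of_subset_of_card_le hs
      (by rw [hcard₂ f hf, hcard₂ f₂ hf₂]))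
    obtain ⟨v, hv, hv2⟩ := Finset.not_subset.mp hns
    have hmem : ψ v ∈ f'.image Sum.inl := hEq ▸ Finset.mem_image_of_mem ψ hv
    rw [hψ v, if_neg hv2] at hmem
    obtain ⟨a, _, ha⟩ := Finset.mem_image.mp hmem
    exact absurd ha (by simp)
  set P₁ : Finset (V₁ ⊕ V₂) → Prop :=
    fun g => ∃ f, (f ∈ F₁ ∧ f ≠ f₁) ∧ g = f.image Sum.inl with hP₁
  set P₂ : Finset (V₁ ⊕ V₂) → Prop :=
    fun g => ∃ f, (f ∈ F₂ ∧ f ≠ f₂) ∧ g = f.image ψ with hP₂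
  set b : Finset (V₁ ⊕ V₂) → Bool := fun g =>
    if h : P₁ g then b₁ h.choose else if h' : P₂ g then b₂ h'.choose else true
    with hb
  have hb1val : ∀ f ∈ F₁, f ≠ f₁ → b (f.image Sum.inl) = b₁ f := by
    intro f hf hne
    have h : P₁ (f.image Sum.inl) := ⟨f, ⟨hf, hne⟩, rfl⟩
    have spec := h.choose_spec
    have : h.choose = f :=
      Finset.image_injective hinl spec.2.symm
    rw [hb]; simp only [dif_pos h, this]
  have hb2val : ∀ f ∈ F₂, f ≠ f₂ → b (f.image ψ) = b₂ f := by
    intro f hf hne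
    have h1 : ¬ P₁ (f.image ψ) := by
      rintro ⟨f', _, hEq⟩
      exact hdisj f hf hne f' hEq
    have h : P₂ (f.image ψ) := ⟨f, ⟨hf, hne⟩, rfl⟩
    have spec := h.choose_spec
    have : h.choose = f := Finset.image_injective hψinj spec.2.symm
    rw [hb]; simp only [dif_neg h1, dif_pos h, this]
  -- key lemma for mixed adjacencies
  have key : ∀ f ∈ F₁, f ≠ f₁ → ∀ f' ∈ F₂, f' ≠ f₂ →
      ((f.image Sum.inl) ∩ (f'.image ψ)).card = n → b₁ f = false ∧ b₂ f' = true := by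
    intro f hf hne f' hf' hne' hcard
    set r₂ : Finset V₂ := f' ∩ f₂ with hr₂
    set r : Finset V₁ := r₂.image e with hr
    have hinter : (f.image Sum.inl) ∩ (f'.image ψ) = (f ∩ r).image Sum.inl := by
      ext x
      simp only [Finset.mem_inter, Finset.mem_image, hr, hr₂]
      constructor
      · rintro ⟨⟨a, ha, rfl⟩, ⟨v, hv, hψv⟩⟩
        rw [hψ v] at hψv
        by_cases hvf₂ : v ∈ f₂
        · rw [if_pos hvf₂] at hψv
          exact ⟨a, ⟨ha, v, ⟨hv, hvf₂⟩, Sum.inl.inj hψv⟩, rfl⟩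
        · rw [if_neg hvf₂] at hψv; cases hψv
      · rintro ⟨a, ⟨ha, v, hv, rfl⟩, rfl⟩
        have hvf₂ : v ∈ f₂ := hv.2
        refine ⟨⟨e v, ha, rfl⟩, v, hv.1, ?_⟩
        rw [hψ v, if_pos hvf₂]
    rw [hinter, Finset.card_image_of_injective _ hinl] at hcard
    have hrcard : r.card = r₂.card :=
      Finset.card_image_of_injOn (he.injOn.mono
        (fun x hx => Finset.mem_coe.mpr ((Finset.mem_inter.mp hx).2)))
    have hr₂le : r₂.card ≤ n := by
      by_contra hcon
      push_neg at hcon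
      have h1 : r₂.card ≤ n + 1 := by
        rw [← hcard₂ f₂ hf₂]
        exact Finset.card_le_card Finset.inter_subset_right
      have h2 : r₂ = f₂ := Finset.eq_of_subset_of_card_le Finset.inter_subset_right
        (by rw [hcard₂ f₂ hf₂]; omega)
      have hsub : f₂ ⊆ f' := h2 ▸ Finset.inter_subset_left
      exact hne' (Finset.eq_of_subset_of_card_le hsub
        (by rw [hcard₂ f' hf', hcard₂ f₂ hf₂])).symm
    have hle2 : n ≤ r.card := by
      rw [← hcard]; exact Finset.card_le_card Finset.inter_subset_right
    have hrn : r₂.card = n := le_antisymm hr₂le (hrcard ▸ hle2)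
    have hrf : r ⊆ f := by
      have h3 : f ∩ r = r := Finset.eq_of_subset_of_card_le Finset.inter_subset_right
        (by rw [hcard, hrcard, hrn])
      exact Finset.inter_eq_right.mp h3
    have hrf₁ : r ⊆ f₁ := by
      intro x hx
      obtain ⟨v, hv, rfl⟩ := Finset.mem_image.mp hx
      exact Finset.mem_coe.mp (he.mapsTo (Finset.mem_coe.mpr ((Finset.mem_inter.mp hv).2)))
    have hff₁ : (f ∩ f₁).card = n := by
      apply le_antisymm
      · by_contra hcon
        push_neg at hcon
        have h1 : (f ∩ f₁).card ≤ n + 1 := by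
          rw [← hcard₁ f hf]
          exact Finset.card_le_card Finset.inter_subset_left
        have h2 : f ∩ f₁ = f := Finset.eq_of_subset_of_card_le Finset.inter_subset_left
          (by rw [hcard₁ f hf]; omega)
        have hsub : f ⊆ f₁ := Finset.inter_eq_left.mp h2
        exact hne (Finset.eq_of_subset_of_card_le hsub
          (by rw [hcard₁ f hf, hcard₁ f₁ hf₁]))
      · calc n = r.card := by rw [hrcard, hrn]
          _ ≤ (f ∩ f₁).card := Finset.card_le_card (Finset.subset_inter hrf hrf₁)
    have hA : b₁ f ≠ b₁ f₁ := hb₁ f hf f₁ hf₁ hne hff₁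
    have hB : b₂ f' ≠ b₂ f₂ := hb₂ f' hf' f₂ hf₂ hne' hrn
    rw [hblack] at hA
    rw [hwhite] at hB
    exact ⟨Bool.eq_false_iff.mpr hA, Bool.ne_false_iff.mp hB⟩
  refine ⟨b, hb1val, hb2val, ?_⟩
  rintro g₁ (⟨f, hf, hfne, rfl⟩ | ⟨f, hf, hfne, rfl⟩) g₂
      (⟨f', hf', hf'ne, rfl⟩ | ⟨f', hf', hf'ne, rfl⟩) hgne hcard
  · rw [hb1val f hf hfne, hb1val f' hf' hf'ne]
    refine hb₁ f hf f' hf' (fun h => hgne (by rw [h])) ?_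
    rwa [← Finset.image_inter f f' hinl, Finset.card_image_of_injective _ hinl] at hcard
  · obtain ⟨h1, h2⟩ := key f hf hfne f' hf' hf'ne hcard
    rw [hb1val f hf hfne, hb2val f' hf' hf'ne, h1, h2]
    simp
  · have hcard' : ((f'.image Sum.inl) ∩ (f.image ψ)).card = n := by
      rwa [Finset.inter_comm] at hcard
    obtain ⟨h1, h2⟩ := key f' hf' hf'ne f hf hfne hcard'
    rw [hb1val f' hf' hf'ne, hb2val f hf hfne, h1, h2]
    simp
  · rw [hb2val f hf hfne, hb2val f' hf' hf'ne]
    refine hb₂ f hf f' hf' (fun h => hgne (by rw [h])) ?_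
    rwa [← Finset.image_inter f f' hψinj, Finset.card_image_of_injective _ hψinj] at hcard
end
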